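/- Let m ≥ 1, α > 1, Ω = B_1(0) ⊂ ℝ^m, ψ(y) = (1−|y|)^α, and define the heat loss F(t) = ∫_{|x|>1} ∫_{B_1(0)} (4πt)^{-m/2} e^{-|x-y|²/(4t)} (1−|y|)^α dy dx. Then lim_{t↓0} F(t)/t = 0. -/

import Mathlib

/-!
For `y` in the unit ball and `‖x‖ > 1` we have `1 - ‖y‖ ≤ |x - y|`, so half of the Gaussian decay
of `p(x, y; t)` absorbs a factor `(1 - ‖y‖) ^ (2p)` at the price of `t ^ p`, leaving the heat
kernel at time `2t` times `(1 - ‖y‖) ^ (α - 2p)`. Integrating out `x` (the kernel has unit mass)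
bounds the heat loss by `C t ^ p ∫_{B_1} (1 - ‖y‖) ^ (α - 2p) dy`, and the weight is integrable as
long as `α - 2p > -1`. Since `α > 1` this allows `p > 1`, whence `F(t) = O(t ^ p) = o(t)`.
-/

open Real MeasureTheory Filter Metric Set Topology
open scoped ENNReal

namespace Real

theorem rpow_mul_exp_neg_le {x p : ℝ} (hx : 0 ≤ x) (hp : 0 < p) : x ^ p * exp (-x) ≤ p ^ p := by
  have hx_le : x ≤ p * exp (x / p) := by
    have := add_one_le_exp (x / p)
    rw [← div_le_iff₀' hp]
    linarith
  calc x ^ p * exp (-x) ≤ (p * exp (x / p)) ^ p * exp (-x) := by gcongr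
    _ = p ^ p := by
      rw [mul_rpow hp.le (exp_pos _).le, ← exp_mul, div_mul_cancel₀ _ hp.ne', mul_assoc,
        ← exp_add, add_neg_cancel, exp_zero, mul_one]

end Real

theorem exp_neg_sq_div_mul_rpow_le {u d t α p : ℝ} (hu : 0 < u) (hud : u ≤ d) (ht : 0 < t)
    (hp : 0 < p) :
    exp (-d ^ 2 / (4 * t)) * u ^ α ≤
      (8 * p * t) ^ p * (exp (-d ^ 2 / (8 * t)) * u ^ (α - 2 * p)) := by
  have hsplit : exp (-d ^ 2 / (4 * t)) = exp (-d ^ 2 / (8 * t)) * exp (-d ^ 2 / (8 * t)) := by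
    rw [← exp_add]; ring_nf
  have hdecay : exp (-d ^ 2 / (8 * t)) ≤ exp (-u ^ 2 / (8 * t)) := by
    gcongr
  have hpow : u ^ α = u ^ (α - 2 * p) * (u ^ 2) ^ p := by
    rw [← rpow_natCast, ← rpow_mul hu.le, ← rpow_add hu]; ring_nf
  have hgain : (u ^ 2) ^ p * exp (-u ^ 2 / (8 * t)) ≤ (8 * p * t) ^ p := by
    have hmax := rpow_mul_exp_neg_le (div_nonneg (sq_nonneg u) (by positivity : (0:ℝ) ≤ 8 * t)) hp
    calc (u ^ 2) ^ p * exp (-u ^ 2 / (8 * t))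
        = (8 * t) ^ p * ((u ^ 2 / (8 * t)) ^ p * exp (-(u ^ 2 / (8 * t)))) := by
          rw [div_rpow (sq_nonneg u) (by positivity), neg_div]
          field_simp
      _ ≤ (8 * t) ^ p * p ^ p := mul_le_mul_of_nonneg_left hmax (by positivity)
      _ = (8 * p * t) ^ p := by
          rw [← mul_rpow (by positivity) hp.le]; ring_nf
  calc exp (-d ^ 2 / (4 * t)) * u ^ α
      = exp (-d ^ 2 / (8 * t)) * u ^ (α - 2 * p) * (exp (-d ^ 2 / (8 * t)) * (u ^ 2) ^ p) := by
        rw [hsplit, hpow]; ring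
    _ ≤ exp (-d ^ 2 / (8 * t)) * u ^ (α - 2 * p) * (exp (-u ^ 2 / (8 * t)) * (u ^ 2) ^ p) := by
        gcongr
    _ ≤ exp (-d ^ 2 / (8 * t)) * u ^ (α - 2 * p) * (8 * p * t) ^ p := by
        gcongr; rw [mul_comm]; exact hgain
    _ = _ := by ring

theorem tendsto_div_nhdsGT_zero_of_norm_le_rpow {f : ℝ → ℝ} {K p : ℝ} (hp : 1 < p)
    (hf : ∀ t, 0 < t → ‖f t‖ ≤ K * t ^ p) : Tendsto (fun t => f t / t) (𝓝[>] 0) (𝓝 0) := by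
  have hlim : Tendsto (fun t : ℝ => K * t ^ (p - 1)) (𝓝[>] 0) (𝓝 0) := by
    have h := (continuousAt_rpow_const 0 (p - 1) (Or.inr (by linarith))).tendsto
    rw [zero_rpow (by linarith)] at h
    simpa using (h.const_mul K).mono_left nhdsWithin_le_nhds
  refine squeeze_zero_norm' ?_ hlim
  filter_upwards [self_mem_nhdsWithin] with t (ht : 0 < t)
  rw [norm_div, Real.norm_of_nonneg ht.le, div_le_iff₀ ht, mul_assoc, ← rpow_add_one ht.ne',
    sub_add_cancel]
  exact hf t ht

theorem integrableOn_ball_one_sub_norm_rpow {E : Type*} [NormedAddCommGroup E] [NormedSpace ℝ E]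
    [Nontrivial E] [FiniteDimensional ℝ E] [MeasurableSpace E] [BorelSpace E]
    (μ : Measure E) [μ.IsAddHaarMeasure] {β : ℝ} (hβ : -1 < β) :
    IntegrableOn (fun y : E => (1 - ‖y‖) ^ β) (ball 0 1) μ := by
  rw [integrableOn_fun_norm_addHaar μ (f := fun r => (1 - r) ^ β)]
  have hweight : IntegrableOn (fun r : ℝ => (1 - r) ^ β) (Ioo 0 1) := by
    have := (intervalIntegral.intervalIntegrable_rpow' hβ (a := 1) (b := 0)).comp_sub_left 1
    rw [sub_self, sub_zero, intervalIntegrable_iff_integrableOn_Ioo_of_le zero_le_one] at this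
    exact this
  refine hweight.mono' (by fun_prop) ((ae_restrict_iff' measurableSet_Ioo).2 (.of_forall ?_))
  rintro r ⟨hr0, hr1⟩
  rw [smul_eq_mul, norm_mul, norm_pow, Real.norm_of_nonneg hr0.le,
    Real.norm_of_nonneg (rpow_nonneg (by linarith) _)]
  exact mul_le_of_le_one_left (rpow_nonneg (by linarith) _) (pow_le_one₀ hr0.le hr1.le)

noncomputable def heatKernel (m : ℕ) (t : ℝ) (x y : EuclideanSpace ℝ (Fin m)) : ℝ :=
  (4 * π * t) ^ (-(m : ℝ) / 2) * exp (-dist x y ^ 2 / (4 * t))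

namespace heatKernel

variable {m : ℕ} {t : ℝ}

theorem nonneg (ht : 0 ≤ t) (x y : EuclideanSpace ℝ (Fin m)) : 0 ≤ heatKernel m t x y := by
  unfold heatKernel; positivity

theorem integral_eq_one (ht : 0 < t) (y : EuclideanSpace ℝ (Fin m)) :
    ∫ x, heatKernel m t x y = 1 := by
  have hb : 0 < 1 / (4 * t) := by positivity
  calc ∫ x, heatKernel m t x y
      = ∫ x, (4 * π * t) ^ (-(m : ℝ) / 2) * exp (-(1 / (4 * t)) * ‖x - y‖ ^ 2) := by
        congr with x
        rw [heatKernel, dist_eq_norm]; ring_nf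
    _ = ∫ z, (4 * π * t) ^ (-(m : ℝ) / 2) * exp (-(1 / (4 * t)) * ‖z‖ ^ 2) :=
        integral_sub_right_eq_self
          (fun z => (4 * π * t) ^ (-(m : ℝ) / 2) * exp (-(1 / (4 * t)) * ‖z‖ ^ 2)) y
    _ = 1 := by
        rw [integral_const_mul, GaussianFourier.integral_rexp_neg_mul_sq_norm hb,
          finrank_euclideanSpace_fin, div_div_eq_mul_div, div_one, neg_div,
          rpow_neg (by positivity), show π * (4 * t) = 4 * π * t by ring,
          inv_mul_cancel₀ (by positivity)]

theorem lintegral_eq_one (ht : 0 < t) (y : EuclideanSpace ℝ (Fin m)) :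
    ∫⁻ x, ENNReal.ofReal (heatKernel m t x y) = 1 := by
  have hint : Integrable (heatKernel m t · y) :=
    .of_integral_ne_zero (by rw [integral_eq_one ht]; exact one_ne_zero)
  rw [← ofReal_integral_eq_lintegral_ofReal hint (.of_forall fun x => nonneg ht.le x y),
    integral_eq_one ht, ENNReal.ofReal_one]

theorem mul_rpow_le_heatKernel_two_mul {α p u : ℝ} (ht : 0 < t) (hp : 0 < p)
    {x y : EuclideanSpace ℝ (Fin m)} (hu : 0 < u) (hud : u ≤ dist x y) :
    heatKernel m t x y * u ^ α ≤
      2 ^ ((m : ℝ) / 2) * (8 * p * t) ^ p * (heatKernel m (2 * t) x y * u ^ (α - 2 * p)) := by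
  have hscale : (4 * π * t) ^ (-(m : ℝ) / 2) =
      2 ^ ((m : ℝ) / 2) * (4 * π * (2 * t)) ^ (-(m : ℝ) / 2) := by
    rw [show 4 * π * (2 * t) = 2 * (4 * π * t) by ring, mul_rpow zero_le_two (by positivity),
      ← mul_assoc, ← rpow_add two_pos, neg_div, add_neg_cancel, rpow_zero, one_mul]
  calc heatKernel m t x y * u ^ α
      = (4 * π * t) ^ (-(m : ℝ) / 2) * (exp (-dist x y ^ 2 / (4 * t)) * u ^ α) := by
        rw [heatKernel, mul_assoc]
    _ ≤ (4 * π * t) ^ (-(m : ℝ) / 2) *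
          ((8 * p * t) ^ p * (exp (-dist x y ^ 2 / (8 * t)) * u ^ (α - 2 * p))) := by
        gcongr ?_ * ?_
        exact exp_neg_sq_div_mul_rpow_le hu hud ht hp
    _ = _ := by
        rw [hscale, heatKernel, show 4 * (2 * t) = 8 * t by ring]; ring

end heatKernel

theorem enorm_heat_loss_le {m : ℕ} {α p t : ℝ} (ht : 0 < t) (hp : 0 < p) :
    ‖∫ x in {x : EuclideanSpace ℝ (Fin m) | 1 < ‖x‖}, ∫ y in ball (0 : EuclideanSpace ℝ (Fin m)) 1,
        heatKernel m t x y * (1 - ‖y‖) ^ α‖ₑ ≤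
      ENNReal.ofReal (2 ^ ((m : ℝ) / 2) * (8 * p * t) ^ p) *
        ∫⁻ y in ball (0 : EuclideanSpace ℝ (Fin m)) 1,
          ENNReal.ofReal ((1 - ‖y‖) ^ (α - 2 * p)) := by
  set S := {x : EuclideanSpace ℝ (Fin m) | 1 < ‖x‖}
  set B := ball (0 : EuclideanSpace ℝ (Fin m)) 1
  set C := 2 ^ ((m : ℝ) / 2) * (8 * p * t) ^ p
  have hS : MeasurableSet S := measurableSet_lt measurable_const measurable_norm
  have hpoint : ∀ x ∈ S, ∀ y ∈ B, ‖heatKernel m t x y * (1 - ‖y‖) ^ α‖ₑ ≤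
      ENNReal.ofReal C *
        (ENNReal.ofReal (heatKernel m (2 * t) x y) * ENNReal.ofReal ((1 - ‖y‖) ^ (α - 2 * p))) := by
    intro x (hx : 1 < ‖x‖) y hy
    have hu : 0 < 1 - ‖y‖ := by rw [mem_ball_zero_iff] at hy; linarith
    have hud : 1 - ‖y‖ ≤ dist x y := by rw [dist_eq_norm]; linarith [norm_sub_norm_le x y]
    have hk := heatKernel.nonneg ht.le x y
    have hk2 := heatKernel.nonneg (by positivity : 0 ≤ 2 * t) x y
    rw [Real.enorm_eq_ofReal (by positivity), ← ENNReal.ofReal_mul hk2,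
      ← ENNReal.ofReal_mul (by positivity)]
    exact ENNReal.ofReal_le_ofReal (heatKernel.mul_rpow_le_heatKernel_two_mul ht hp hu hud)
  have hmeas : AEMeasurable (Function.uncurry fun x y =>
      ENNReal.ofReal (heatKernel m (2 * t) x y) * ENNReal.ofReal ((1 - ‖y‖) ^ (α - 2 * p)))
      ((volume.restrict S).prod (volume.restrict B)) := by
    unfold heatKernel; fun_prop
  calc ‖∫ x in S, ∫ y in B, heatKernel m t x y * (1 - ‖y‖) ^ α‖ₑ
      ≤ ∫⁻ x in S, ∫⁻ y in B, ‖heatKernel m t x y * (1 - ‖y‖) ^ α‖ₑ :=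
        (enorm_integral_le_lintegral_enorm _).trans
          (lintegral_mono fun x => enorm_integral_le_lintegral_enorm _)
    _ ≤ ∫⁻ x in S, ∫⁻ y in B, ENNReal.ofReal C *
          (ENNReal.ofReal (heatKernel m (2 * t) x y) * ENNReal.ofReal ((1 - ‖y‖) ^ (α - 2 * p))) :=
        setLIntegral_mono' hS fun x hx => setLIntegral_mono' measurableSet_ball (hpoint x hx)
    _ = ENNReal.ofReal C * ∫⁻ y in B, (∫⁻ x in S, ENNReal.ofReal (heatKernel m (2 * t) x y)) *
          ENNReal.ofReal ((1 - ‖y‖) ^ (α - 2 * p)) := by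
        simp_rw [lintegral_const_mul' _ _ ENNReal.ofReal_ne_top]
        rw [lintegral_lintegral_swap hmeas]
        simp_rw [lintegral_mul_const' _ _ ENNReal.ofReal_ne_top]
    _ ≤ ENNReal.ofReal C * ∫⁻ y in B, ENNReal.ofReal ((1 - ‖y‖) ^ (α - 2 * p)) := by
        gcongr with y
        calc (∫⁻ x in S, ENNReal.ofReal (heatKernel m (2 * t) x y)) * _
            ≤ (∫⁻ x, ENNReal.ofReal (heatKernel m (2 * t) x y)) * _ := by
              gcongr; exact Measure.restrict_le_self
          _ = _ := by rw [heatKernel.lintegral_eq_one (by positivity), one_mul]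

theorem heat_loss_right_derivative_zero (m : ℕ) (hm : 1 ≤ m) (α : ℝ) (hα : 1 < α)
    (F : ℝ → ℝ)
    (hF : ∀ t : ℝ, F t = ∫ x in {x : EuclideanSpace ℝ (Fin m) | 1 < ‖x‖},
        ∫ y in Metric.ball (0 : EuclideanSpace ℝ (Fin m)) 1,
          (4 * Real.pi * t) ^ (-(m : ℝ) / 2) * Real.exp (-(dist x y) ^ 2 / (4 * t))
            * (1 - ‖y‖) ^ α) :
    Tendsto (fun t : ℝ => F t / t) (nhdsWithin 0 (Set.Ioi 0)) (nhds 0) := by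
  have : Nonempty (Fin m) := ⟨⟨0, hm⟩⟩
  obtain ⟨p, hp, hβ⟩ : ∃ p, 1 < p ∧ -1 < α - 2 * p := ⟨(α + 3) / 4, by linarith, by linarith⟩
  set J := ∫⁻ y in ball (0 : EuclideanSpace ℝ (Fin m)) 1, ENNReal.ofReal ((1 - ‖y‖) ^ (α - 2 * p))
  have hJ : J ≠ ∞ := (integrableOn_ball_one_sub_norm_rpow volume hβ).lintegral_lt_top.ne
  refine tendsto_div_nhdsGT_zero_of_norm_le_rpow (K := 2 ^ ((m : ℝ) / 2) * (8 * p) ^ p * J.toReal)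
    hp fun t ht => ?_
  rw [← toReal_enorm, hF t]
  refine (ENNReal.toReal_mono (by finiteness) (enorm_heat_loss_le ht (by linarith))).trans_eq ?_
  rw [ENNReal.toReal_mul, ENNReal.toReal_ofReal (by positivity), mul_rpow (by positivity) ht.le]
  ring
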